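/- arXiv:math/0003016 — 2 statements merged into one kernel-verified Lean document; each statement's English description precedes it below -/
import Mathlib

section
/- Let k be a field and let p, q ∈ k[x, y] be coprime homogeneous polynomials of degrees d and e respectively, with d, e ≥ 1. Then for every homogeneous polynomial f of degree d + e − 1 there exist unique homogeneous polynomials a of degree e − 1 and b of degree d − 1 such that f = a·p + b·q. -/
/-!
If `a * p + b * q = 0` with `deg a < deg q`, then `q ∣ a * p`, so `q ∣ a` by coprimality
(`k[x, y]` is a UFD), forcing `a = 0` and then `b = 0`. Hence `(a, b) ↦ a * p + b * q` is an
injective linear map between spaces of binary forms; both sides have dimension `d + e`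
(forms of degree `n` in two variables span a space of dimension `n + 1`), so it is bijective.
-/

open MvPolynomial

namespace MvPolynomial

variable {σ R : Type*}

section CommSemiring

variable [CommSemiring R] {p a : MvPolynomial σ R} {m n : ℕ}

theorem IsHomogeneous.eq_zero_of_dvd (hp : p.IsHomogeneous n) (ha : a.IsHomogeneous m)
    (hmn : m < n) (hdvd : p ∣ a) : a = 0 := by
  obtain ⟨c, rfl⟩ := hdvd
  have hcomp : ∀ j, homogeneousComponent m (p * homogeneousComponent j c) = 0 := fun j =>
    homogeneousComponent_of_mem (hp.mul (homogeneousComponent_isHomogeneous j c)) ▸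
      if_neg (by omega)
  rw [← homogeneousComponent_eq_self ha, ← sum_homogeneousComponent c, Finset.mul_sum, map_sum]
  exact Finset.sum_eq_zero fun j _ => hcomp j

theorem IsHomogeneous.not_isUnit [Nontrivial R] (hp : p.IsHomogeneous n) (hn : 0 < n) :
    ¬IsUnit p := fun hu => one_ne_zero (hp.eq_zero_of_dvd (isHomogeneous_one σ R) hn hu.dvd)

end CommSemiring

section CommRing

variable [CommRing R] {p q : MvPolynomial σ R} {d e m n N : ℕ}

noncomputable def koszulMap (hp : p.IsHomogeneous d) (hq : q.IsHomogeneous e) (hm : m + d = N)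
    (hn : n + e = N) :
    homogeneousSubmodule σ R m × homogeneousSubmodule σ R n →ₗ[R] homogeneousSubmodule σ R N :=
  LinearMap.codRestrict _
    ((LinearMap.mulRight R p ∘ₗ (homogeneousSubmodule σ R m).subtype).coprod
      (LinearMap.mulRight R q ∘ₗ (homogeneousSubmodule σ R n).subtype))
    fun ab => (hm ▸ ab.1.2.mul hp).add (hn ▸ ab.2.2.mul hq)

theorem koszulMap_injective [UniqueFactorizationMonoid R] (hp : p.IsHomogeneous d)
    (hq : q.IsHomogeneous e) (hm : m + d = N) (hn : n + e = N) (hpq : IsRelPrime p q)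
    (hq0 : q ≠ 0) (hme : m < e) : Function.Injective (koszulMap hp hq hm hn) := by
  rw [injective_iff_map_eq_zero]
  rintro ⟨⟨a, ha⟩, ⟨b, hb⟩⟩ h
  have hab : a * p + b * q = 0 := congrArg Subtype.val h
  have ha0 : a = 0 :=
    hq.eq_zero_of_dvd ha hme (hpq.symm.dvd_of_dvd_mul_right ⟨-b, by linear_combination hab⟩)
  have hb0 : b = 0 := by simpa [ha0, hq0] using hab
  simp [ha0, hb0]

theorem existsUnique_of_bijective_koszulMap (hp : p.IsHomogeneous d) (hq : q.IsHomogeneous e)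
    (hm : m + d = N) (hn : n + e = N) (hbij : Function.Bijective (koszulMap hp hq hm hn))
    {f : MvPolynomial σ R} (hf : f.IsHomogeneous N) :
    ∃! ab : MvPolynomial σ R × MvPolynomial σ R,
      ab.1.IsHomogeneous m ∧ ab.2.IsHomogeneous n ∧ f = ab.1 * p + ab.2 * q := by
  obtain ⟨⟨a, b⟩, hab⟩ := hbij.2 ⟨f, hf⟩
  refine ⟨(a, b), ⟨a.2, b.2, (congrArg Subtype.val hab).symm⟩, ?_⟩
  rintro ⟨a', b'⟩ ⟨ha', hb', rfl⟩
  have := @hbij.1 (⟨a', ha'⟩, ⟨b', hb'⟩) (a, b) (Subtype.ext (congrArg Subtype.val hab).symm)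
  simp only [Prod.mk.injEq, Subtype.ext_iff] at this
  rw [this.1, this.2]

end CommRing

instance {σ : Type*} [Finite σ] (R : Type*) [CommSemiring R] (n : ℕ) :
    Module.Finite R (homogeneousSubmodule σ R n) :=
  Module.Finite.iff_fg.mpr (homogeneousSubmodule_fg σ R n)

section Finrank

variable [CommRing R] [Nontrivial R] [Fintype σ]

theorem finrank_homogeneousSubmodule (n : ℕ) :
    Module.finrank R (homogeneousSubmodule σ R n) = (Fintype.card σ + n - 1).choose n := by
  classical
  have hdeg : {d : σ →₀ ℕ | d.degree = n} =
      ((Finset.univ : Finset σ).finsuppAntidiag n : Set (σ →₀ ℕ)) := by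
    ext d
    simp [Finsupp.degree_eq_sum]
  rw [homogeneousSubmodule_eq_finsupp_supported, hdeg, ← restrictSupport,
    Module.finrank_eq_card_basis (basisRestrictSupport R _)]
  simp only [Finset.coe_sort_coe, Fintype.card_coe, Finset.card_finsuppAntidiag_nat_eq_choose,
    Finset.card_univ]

end Finrank

theorem finrank_homogeneousSubmodule_fin_two (R : Type*) [CommRing R] [Nontrivial R] (n : ℕ) :
    Module.finrank R (homogeneousSubmodule (Fin 2) R n) = n + 1 := by
  rw [finrank_homogeneousSubmodule, Fintype.card_fin, show 2 + n - 1 = n + 1 by omega,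
    Nat.choose_succ_self_right]

end MvPolynomial

/-- Koszul decomposition for coprime binary forms: if `p, q ∈ k[x,y]` are coprime
homogeneous of degrees `d, e ≥ 1` (coprime in the sense that any common divisor is a
unit), then every homogeneous `f` of degree `d + e − 1` is uniquely `a·p + b·q` with
`a` homogeneous of degree `e − 1` and `b` homogeneous of degree `d − 1`. -/
theorem koszul_decomposition_binary_forms (k : Type*) [Field k]
    (p q : MvPolynomial (Fin 2) k) (d e : ℕ) (hd : 1 ≤ d) (he : 1 ≤ e)
    (hp : p.IsHomogeneous d) (hq : q.IsHomogeneous e)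
    (hcop : ∀ r : MvPolynomial (Fin 2) k, r ∣ p → r ∣ q → IsUnit r)
    (f : MvPolynomial (Fin 2) k) (hf : f.IsHomogeneous (d + e - 1)) :
    ∃! ab : MvPolynomial (Fin 2) k × MvPolynomial (Fin 2) k,
      ab.1.IsHomogeneous (e - 1) ∧ ab.2.IsHomogeneous (d - 1) ∧
        f = ab.1 * p + ab.2 * q := by
  have hq0 : q ≠ 0 := by
    rintro rfl
    exact hp.not_isUnit hd (hcop p dvd_rfl (dvd_zero p))
  have hinj := koszulMap_injective hp hq (m := e - 1) (n := d - 1) (N := d + e - 1)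
    (by omega) (by omega) hcop hq0 (by omega)
  have hdim : Module.finrank k (homogeneousSubmodule (Fin 2) k (e - 1) ×
      homogeneousSubmodule (Fin 2) k (d - 1)) =
      Module.finrank k (homogeneousSubmodule (Fin 2) k (d + e - 1)) := by
    simp only [Module.finrank_prod, finrank_homogeneousSubmodule_fin_two]
    omega
  exact existsUnique_of_bijective_koszulMap hp hq _ _
    ⟨hinj, (LinearMap.injective_iff_surjective_of_finrank_eq_finrank hdim).mp hinj⟩ hf
end

section
/- Let k be a field of characteristic 0 and c ∈ k. In k[u, v], set f₂ = u² + v², f₃ = u³ + v³, and f₄ = −u³v − 2c·u²v² − u·v³. Then the pair φ = c·(u + v), ψ = −(c·u² + (1+c)·u·v + c·v²) is the unique pair with φ homogeneous linear and ψ homogeneous quadratic such that f₃·φ + f₂·ψ = f₄. -/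
/-!
Existence is a direct expansion. For uniqueness, the difference of two solutions is a syzygy
`f₃ φ + f₂ ψ = 0` with `φ = a u + b v`, `ψ = p u² + q uv + r v²`. Its coefficients
`a + p, b + q, p + r, a + q, b + r` all vanish, which forces `2a = 0` and then everything to
vanish as soon as `2 ≠ 0` (in characteristic 2, `u + v` divides both `f₂` and `f₃`).
-/

open MvPolynomial Finsupp

theorem Finsupp.eq_single_add_single_of_degree_eq {m : Fin 2 →₀ ℕ} {n : ℕ} (h : m.degree = n) :
    m = single 0 (m 0) + single 1 (n - m 0) := by
  rw [degree_eq_sum, Fin.sum_univ_two] at h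
  ext i; fin_cases i <;> simp [← h]

namespace MvPolynomial

variable {R : Type*} [CommSemiring R]

theorem C_mul_X_pow_mul_X_pow_eq_monomial {σ : Type*} (c : R) (i j : σ) (a b : ℕ) :
    (C c * X i ^ a * X j ^ b : MvPolynomial σ R) = monomial (single i a + single j b) c := by
  rw [C_mul_X_pow_eq_monomial, monomial_add_single]

theorem coeff_single_add_single_monomial (c : R) (i j i' j' : ℕ) :
    coeff (single 0 i + single 1 j) (monomial (single (0 : Fin 2) i' + single 1 j') c) =
      if i' = i ∧ j' = j then c else 0 := by
  simp [coeff_monomial, Finsupp.ext_iff, Fin.forall_fin_two]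

theorem IsHomogeneous.eq_sum_fin_two {ψ : MvPolynomial (Fin 2) R} {n : ℕ}
    (h : ψ.IsHomogeneous n) :
    ψ = ∑ i ∈ Finset.range (n + 1),
      C (coeff (single 0 i + single 1 (n - i)) ψ) * X 0 ^ i * X 1 ^ (n - i) := by
  ext m
  simp only [coeff_sum, C_mul_X_pow_mul_X_pow_eq_monomial, coeff_monomial]
  by_cases hm : m.degree = n
  · have hm0 : m 0 ≤ n := hm ▸ le_degree 0 m
    rw [Finset.sum_eq_single (m 0), ← eq_single_add_single_of_degree_eq hm, if_pos rfl]
    · rintro i - hi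
      exact if_neg fun he => hi (by simpa using congrArg (· 0) he)
    · simp [hm0]
  · rw [h.coeff_eq_zero hm]
    refine (Finset.sum_eq_zero fun i hi => if_neg fun he => hm ?_).symm
    rw [← he, map_add, degree_single, degree_single]
    exact Nat.add_sub_cancel' (Nat.lt_succ_iff.mp (Finset.mem_range.mp hi))

theorem IsHomogeneous.eq_linear_fin_two {φ : MvPolynomial (Fin 2) R} (h : φ.IsHomogeneous 1) :
    φ = C (coeff (single 0 1) φ) * X 0 + C (coeff (single 1 1) φ) * X 1 := by
  conv_lhs => rw [h.eq_sum_fin_two]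
  simp only [Finset.sum_range_succ, Finset.sum_range_zero, Nat.reduceSub, single_zero, zero_add,
    add_zero, pow_zero, pow_one, mul_one]
  ring

theorem IsHomogeneous.eq_quadratic_fin_two {ψ : MvPolynomial (Fin 2) R}
    (h : ψ.IsHomogeneous 2) :
    ψ = C (coeff (single 0 2) ψ) * X 0 ^ 2 + C (coeff (single 0 1 + single 1 1) ψ) * X 0 * X 1
      + C (coeff (single 1 2) ψ) * X 1 ^ 2 := by
  conv_lhs => rw [h.eq_sum_fin_two]
  simp only [Finset.sum_range_succ, Finset.sum_range_zero, Nat.reduceSub, single_zero, zero_add,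
    add_zero, pow_zero, pow_one, mul_one]
  ring

end MvPolynomial

theorem eq_zero_of_sum_cubes_mul_add_sum_squares_mul_eq_zero {R : Type*} [CommRing R]
    [NoZeroDivisors R] (h2 : (2 : R) ≠ 0) {φ ψ : MvPolynomial (Fin 2) R}
    (hφ : φ.IsHomogeneous 1) (hψ : ψ.IsHomogeneous 2)
    (h : (X 0 ^ 3 + X 1 ^ 3) * φ + (X 0 ^ 2 + X 1 ^ 2) * ψ = 0) : φ = 0 ∧ ψ = 0 := by
  rw [hφ.eq_linear_fin_two, hψ.eq_quadratic_fin_two] at h ⊢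
  set a := coeff (single 0 1) φ
  set b := coeff (single 1 1) φ
  set p := coeff (single 0 2) ψ
  set q := coeff (single 0 1 + single 1 1) ψ
  set r := coeff (single 1 2) ψ
  replace h : C (a + p) * X 0 ^ 4 * X 1 ^ 0 + C (b + q) * X 0 ^ 3 * X 1 ^ 1
      + C (p + r) * X 0 ^ 2 * X 1 ^ 2 + C (a + q) * X 0 ^ 1 * X 1 ^ 3
      + C (b + r) * X 0 ^ 0 * X 1 ^ 4 = (0 : MvPolynomial (Fin 2) R) := by
    simp only [map_add]; linear_combination h
  simp only [C_mul_X_pow_mul_X_pow_eq_monomial] at h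
  have hcoeff (i j : ℕ) := congrArg (coeff (single 0 i + single 1 j)) h
  have hap := hcoeff 4 0
  have hbq := hcoeff 3 1
  have hpr := hcoeff 2 2
  have haq := hcoeff 1 3
  have hbr := hcoeff 0 4
  simp only [coeff_add, coeff_single_add_single_monomial, coeff_zero] at hap hbq hpr haq hbr
  norm_num at hap hbq hpr haq hbr
  have ha : a = 0 := by
    refine (mul_eq_zero.mp ?_).resolve_left h2
    linear_combination hap + haq - hbq + hbr - hpr
  have hp : p = 0 := by linear_combination hap - ha
  have hq : q = 0 := by linear_combination haq - ha
  have hb : b = 0 := by linear_combination hbq - hq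
  have hr : r = 0 := by linear_combination hbr - hb
  simp [ha, hb, hp, hq, hr]

/-- For `f₂ = u² + v²`, `f₃ = u³ + v³`, `f₄ = −u³v − 2c·u²v² − uv³` in `k[u,v]`
(char 0), the pair `φ = c(u+v)`, `ψ = −(cu² + (1+c)uv + cv²)` is the unique pair with
`φ` homogeneous linear and `ψ` homogeneous quadratic such that `f₃φ + f₂ψ = f₄`. -/
theorem luroth_conic_koszul_solution (k : Type*) [Field k] [CharZero k] (c : k) :
    let u : MvPolynomial (Fin 2) k := X 0
    let v : MvPolynomial (Fin 2) k := X 1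
    let f₂ := u ^ 2 + v ^ 2
    let f₃ := u ^ 3 + v ^ 3
    let f₄ := -(u ^ 3 * v) - C (2 * c) * u ^ 2 * v ^ 2 - u * v ^ 3
    let φ₀ := C c * (u + v)
    let ψ₀ := -(C c * u ^ 2 + C (1 + c) * u * v + C c * v ^ 2)
    (φ₀.IsHomogeneous 1 ∧ ψ₀.IsHomogeneous 2 ∧ f₃ * φ₀ + f₂ * ψ₀ = f₄) ∧
      ∀ φ ψ : MvPolynomial (Fin 2) k,
        φ.IsHomogeneous 1 → ψ.IsHomogeneous 2 → f₃ * φ + f₂ * ψ = f₄ →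
          φ = φ₀ ∧ ψ = ψ₀ := by
  intro u v f₂ f₃ f₄ φ₀ ψ₀
  have hu : u.IsHomogeneous 1 := isHomogeneous_X k 0
  have hv : v.IsHomogeneous 1 := isHomogeneous_X k 1
  have hφ₀ : φ₀.IsHomogeneous 1 := (isHomogeneous_C _ c).mul (hu.add hv)
  have hψ₀ : ψ₀.IsHomogeneous 2 :=
    ((((isHomogeneous_C _ c).mul (hu.pow 2)).add
      (((isHomogeneous_C _ (1 + c)).mul hu).mul hv)).add ((isHomogeneous_C _ c).mul (hv.pow 2))).neg
  have hsol : f₃ * φ₀ + f₂ * ψ₀ = f₄ := by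
    simp only [f₂, f₃, f₄, φ₀, ψ₀, map_add, map_mul, map_one, map_ofNat]; ring
  refine ⟨⟨hφ₀, hψ₀, hsol⟩, fun φ ψ hφ hψ h => ?_⟩
  obtain ⟨hφφ₀, hψψ₀⟩ := eq_zero_of_sum_cubes_mul_add_sum_squares_mul_eq_zero two_ne_zero
    (hφ.sub hφ₀) (hψ.sub hψ₀) (by linear_combination h - hsol)
  exact ⟨sub_eq_zero.mp hφφ₀, sub_eq_zero.mp hψψ₀⟩
end
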